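/- arXiv:2507.10113 — 3 statements merged into one kernel-verified Lean document; each statement's English description precedes it below -/
import Mathlib

section
/- Let (Ω, P) be a probability space and M, N positive integers. Let X : Ω → ℂ^{M×N} be a random matrix such that for all indices i,k,j,l the product X_{ij} · conj(X_{kl}) is integrable and E[X_{ij} · conj(X_{kl})] equals 1 if (i,j) = (k,l) and 0 otherwise. Let S ∈ ℂ^{M×M} and T ∈ ℂ^{N×N} be Hermitian matrices with S·S = R_AP and T·T = R_RIS, and define the random matrix H̃ = S X T (pointwise). Then for every positive semidefinite matrix D ∈ ℂ^{N×N}, the entrywise expectation of H̃ D H̃ᴴ equals Tr(R_RIS · D) · R_AP. -/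
open MeasureTheory Matrix BigOperators ComplexOrder

noncomputable section

/-- Entrywise expectation of a random complex matrix. -/
def matExp {Ω : Type*} [MeasurableSpace Ω] (P : Measure Ω) {m n : Type*}
    (A : Ω → Matrix m n ℂ) : Matrix m n ℂ := fun i j => ∫ ω, A ω i j ∂P

/-- **Corollary 1.**
Let `X` have uncorrelated unit-variance entries, let `S, T` be Hermitian square roots of
`R_AP` and `R_RIS`, and let `H̃ = S X T`. Then for every positive semidefinite `D`,
`E[H̃ D H̃ᴴ] = Tr(R_RIS D) • R_AP`. -/
theorem corollary1_correlated_quadratic_form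
    {Ω : Type*} [MeasurableSpace Ω] (P : Measure Ω) [IsProbabilityMeasure P]
    (M N : ℕ) (hM : 0 < M) (hN : 0 < N)
    (X : Ω → Matrix (Fin M) (Fin N) ℂ)
    (hint : ∀ (i k : Fin M) (j l : Fin N),
      Integrable (fun ω => X ω i j * star (X ω k l)) P)
    (hmom : ∀ (i k : Fin M) (j l : Fin N),
      ∫ ω, X ω i j * star (X ω k l) ∂P = if i = k ∧ j = l then 1 else 0)
    (S R_AP : Matrix (Fin M) (Fin M) ℂ) (T R_RIS : Matrix (Fin N) (Fin N) ℂ)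
    (hS : S.IsHermitian) (hT : T.IsHermitian)
    (hS2 : S * S = R_AP) (hT2 : T * T = R_RIS)
    (D : Matrix (Fin N) (Fin N) ℂ) (hD : D.PosSemidef) :
    matExp P (fun ω => (S * X ω * T) * D * (S * X ω * T)ᴴ)
      = (R_RIS * D).trace • R_AP := by
  set Q : Matrix (Fin N) (Fin N) ℂ := T * D * T with hQ
  funext a b
  have hkey : ∀ ω, (S * X ω * T * D * (S * X ω * T)ᴴ) a b
      = ∑ k, ∑ i, ∑ l, ∑ j,
          (S a i * Q j l * S k b) * (X ω i j * star (X ω k l)) := by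
    intro ω
    have h1 : S * X ω * T * D * (S * X ω * T)ᴴ
        = S * (X ω * Q * (X ω)ᴴ) * S := by
      simp only [conjTranspose_mul, hT.eq, hS.eq, hQ, Matrix.mul_assoc]
    rw [h1]
    simp only [mul_apply, conjTranspose_apply, Finset.sum_mul, Finset.mul_sum]
    refine Finset.sum_congr rfl fun i _ => Finset.sum_congr rfl fun k _ =>
      Finset.sum_congr rfl fun l _ => Finset.sum_congr rfl fun j _ => by ring
  show (∫ ω, (S * X ω * T * D * (S * X ω * T)ᴴ) a b ∂P) = _
  simp only [hkey]
  rw [integral_finset_sum _ (fun k _ => integrable_finset_sum _ (fun i _ =>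
      integrable_finset_sum _ (fun l _ => integrable_finset_sum _ (fun j _ =>
      (hint i k j l).const_mul _))))]
  have : ∀ k, (∫ ω, ∑ i, ∑ l, ∑ j,
      (S a i * Q j l * S k b) * (X ω i j * star (X ω k l)) ∂P)
      = ∑ i, ∑ l, ∑ j, (S a i * Q j l * S k b) * (if i = k ∧ j = l then 1 else 0) := by
    intro k
    rw [integral_finset_sum _ (fun i _ => integrable_finset_sum _ (fun l _ =>
        integrable_finset_sum _ (fun j _ => (hint i k j l).const_mul _)))]
    refine Finset.sum_congr rfl fun i _ => ?_
    rw [integral_finset_sum _ (fun l _ => integrable_finset_sum _ (fun j _ =>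
        (hint i k j l).const_mul _))]
    refine Finset.sum_congr rfl fun l _ => ?_
    rw [integral_finset_sum _ (fun j _ => (hint i k j l).const_mul _)]
    refine Finset.sum_congr rfl fun j _ => ?_
    rw [integral_const_mul, hmom]
  refine (Finset.sum_congr rfl fun k _ => this k).trans ?_
  clear this
  simp only [ite_and, mul_ite, mul_one, mul_zero]
  simp only [Finset.sum_ite_irrel, Finset.sum_const_zero, Finset.sum_ite_eq',
    Finset.mem_univ, if_true]
  have htr : Q.trace = (R_RIS * D).trace := by
    rw [hQ, ← hT2, Matrix.trace_mul_comm, ← Matrix.mul_assoc]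
  have hRAP : R_AP a b = ∑ k, S a k * S k b := by
    rw [← hS2, mul_apply]
  rw [Matrix.smul_apply, ← htr, hRAP, smul_eq_mul, Finset.mul_sum]
  refine Finset.sum_congr rfl fun k _ => ?_
  rw [Matrix.trace, Finset.sum_mul]
  refine Finset.sum_congr rfl fun l _ => ?_
  simp only [Matrix.diag_apply]
  ring
end
end

section
/- Let (Ω, P) be a probability space and M, N positive integers. Let X : Ω → ℂ^{M×N} be a random matrix and z̃ : Ω → ℂ^N a random vector such that for all indices i,k ∈ {1,…,M}, j,l,a,b ∈ {1,…,N} the product X_{ij} · z̃_a · conj(X_{kl}) · conj(z̃_b) is integrable and E[X_{ij} · z̃_a · conj(X_{kl}) · conj(z̃_b)] = (1 if (i,j)=(k,l) else 0) · R_{ab}, where R ∈ ℂ^{N×N} is a deterministic matrix. Let S ∈ ℂ^{M×M} and T ∈ ℂ^{N×N} be Hermitian with S·S = R_AP and T·T = R_RIS, and let Φ ∈ ℂ^{N×N} be deterministic. Then the entrywise expectation of (S X T Φ z̃)(S X T Φ z̃)ᴴ equals Tr(R_RIS Φ R Φᴴ) · R_AP. -/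
open MeasureTheory Matrix BigOperators

noncomputable section

/-- Entrywise expectation `E[u vᴴ]` of the outer product of two random complex vectors. -/
def outerExp {Ω : Type*} [MeasurableSpace Ω] (P : Measure Ω) {m n : Type*}
    (u : Ω → m → ℂ) (v : Ω → n → ℂ) : Matrix m n ℂ :=
  fun i j => ∫ ω, u ω i * star (v ω j) ∂P

set_option maxHeartbeats 1000000 in
private theorem expand_pw {M N : ℕ} (S : Matrix (Fin M) (Fin M) ℂ) (B : Matrix (Fin N) (Fin N) ℂ)
    (x : Matrix (Fin M) (Fin N) ℂ) (z : Fin N → ℂ) (i k : Fin M) :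
    ((S * x * B).mulVec z i) * star ((S * x * B).mulVec z k)
      = ∑ l : Fin N, ∑ q' : Fin N, ∑ p' : Fin M, ∑ j : Fin N, ∑ q : Fin N, ∑ p : Fin M,
          (S i p * B q j * star (S k p') * star (B q' l))
            * (x p q * z j * star (x p' q') * star (z l)) := by
  simp only [mulVec, dotProduct, mul_apply, star_sum, star_mul', Finset.sum_mul, Finset.mul_sum]
  exact Finset.sum_congr rfl fun l _ => Finset.sum_congr rfl fun q' _ =>
    Finset.sum_congr rfl fun p' _ => Finset.sum_congr rfl fun j _ =>
    Finset.sum_congr rfl fun q _ => Finset.sum_congr rfl fun p _ => by ring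

private theorem det_sum {M N : ℕ} (S : Matrix (Fin M) (Fin M) ℂ) (B R : Matrix (Fin N) (Fin N) ℂ)
    (i k : Fin M) :
    ∑ l : Fin N, ∑ q' : Fin N, ∑ p' : Fin M, ∑ j : Fin N, ∑ q : Fin N, ∑ p : Fin M,
        (S i p * B q j * star (S k p') * star (B q' l))
          * ((if p = p' ∧ q = q' then (1:ℂ) else 0) * R j l)
      = (∑ q, ∑ l, ∑ j, B q j * R j l * star (B q l)) * (∑ p, S i p * star (S k p)) := by
  simp only [ite_and, mul_ite, ite_mul, mul_one, mul_zero, zero_mul, one_mul,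
    Finset.sum_ite_eq, Finset.sum_ite_eq', Finset.mem_univ, if_true]
  rw [Finset.mul_sum]
  simp only [Finset.sum_mul]
  have comm1 : ∀ f : Fin N → Fin N → Fin M → Fin N → ℂ,
      (∑ l : Fin N, ∑ q : Fin N, ∑ p : Fin M, ∑ j : Fin N, f l q p j)
        = ∑ p : Fin M, ∑ l : Fin N, ∑ q : Fin N, ∑ j : Fin N, f l q p j := fun f => by
    have := Finset.sum_comm (s := (Finset.univ : Finset (Fin N × Fin N)))
      (t := (Finset.univ : Finset (Fin M))) (f := fun a p => ∑ j, f a.1 a.2 p j)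
    simpa [Fintype.sum_prod_type] using this
  rw [comm1]
  refine Finset.sum_congr rfl fun p _ => ?_
  rw [Finset.sum_comm]
  exact Finset.sum_congr rfl fun q _ => Finset.sum_congr rfl fun l _ =>
    Finset.sum_congr rfl fun j _ => by ring

/-- **The doubly-random term in the covariance computation of Lemma 2.**
If the entries of `X` and of `z̃` satisfy the fourth-moment factorization
`E[X i j * z̃ a * conj (X k l) * conj (z̃ b)] = δ_{(i,j),(k,l)} R a b`, and `S, T` are
Hermitian square roots of `R_AP, R_RIS`, then
`E[(S X T Φ z̃)(S X T Φ z̃)ᴴ] = Tr(R_RIS Φ R Φᴴ) • R_AP`. -/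
theorem doubly_random_covariance
    {Ω : Type*} [MeasurableSpace Ω] (P : Measure Ω) [IsProbabilityMeasure P]
    (M N : ℕ) (hM : 0 < M) (hN : 0 < N)
    (X : Ω → Matrix (Fin M) (Fin N) ℂ) (zt : Ω → Fin N → ℂ)
    (R : Matrix (Fin N) (Fin N) ℂ)
    (hint : ∀ (i k : Fin M) (j l a b : Fin N),
      Integrable (fun ω => X ω i j * zt ω a * star (X ω k l) * star (zt ω b)) P)
    (hmom : ∀ (i k : Fin M) (j l a b : Fin N),
      ∫ ω, X ω i j * zt ω a * star (X ω k l) * star (zt ω b) ∂P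
        = (if i = k ∧ j = l then 1 else 0) * R a b)
    (S R_AP : Matrix (Fin M) (Fin M) ℂ) (T R_RIS : Matrix (Fin N) (Fin N) ℂ)
    (hS : S.IsHermitian) (hT : T.IsHermitian)
    (hS2 : S * S = R_AP) (hT2 : T * T = R_RIS)
    (Φ : Matrix (Fin N) (Fin N) ℂ) :
    outerExp P (fun ω => (S * X ω * T * Φ).mulVec (zt ω))
        (fun ω => (S * X ω * T * Φ).mulVec (zt ω))
      = (R_RIS * Φ * R * Φᴴ).trace • R_AP := by
  set B : Matrix (Fin N) (Fin N) ℂ := T * Φ with hBdef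
  ext i k
  show (∫ ω, ((S * X ω * T * Φ).mulVec (zt ω) i)
        * star ((S * X ω * T * Φ).mulVec (zt ω) k) ∂P)
      = ((R_RIS * Φ * R * Φᴴ).trace • R_AP) i k
  have key : ∀ ω, ((S * X ω * T * Φ).mulVec (zt ω) i) * star ((S * X ω * T * Φ).mulVec (zt ω) k)
      = ∑ t : Fin N × Fin N × Fin M × Fin N × Fin N × Fin M,
          (S i t.2.2.2.2.2 * B t.2.2.2.2.1 t.2.2.2.1 * star (S k t.2.2.1) * star (B t.2.1 t.1))
            * (X ω t.2.2.2.2.2 t.2.2.2.2.1 * zt ω t.2.2.2.1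
                * star (X ω t.2.2.1 t.2.1) * star (zt ω t.1)) := by
    intro ω
    have hA : S * X ω * T * Φ = S * X ω * B := by rw [hBdef, Matrix.mul_assoc]
    rw [hA, expand_pw S B (X ω) (zt ω) i k]
    simp [Fintype.sum_prod_type]
  simp only [key]
  rw [integral_finset_sum _ (fun t _ =>
    (hint t.2.2.2.2.2 t.2.2.1 t.2.2.2.2.1 t.2.1 t.2.2.2.1 t.1).const_mul _)]
  simp only [integral_const_mul, hmom]
  simp only [Fintype.sum_prod_type]
  rw [det_sum S B R i k]
  have h1 : R_AP i k = ∑ p, S i p * star (S k p) := by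
    rw [← hS2, Matrix.mul_apply]
    exact Finset.sum_congr rfl fun p _ => by rw [hS.apply]
  have h2 : (R_RIS * Φ * R * Φᴴ).trace = ∑ q, ∑ l, ∑ j, B q j * R j l * star (B q l) := by
    have e1 : (R_RIS * Φ * R * Φᴴ).trace = (B * R * Bᴴ).trace := by
      calc (R_RIS * Φ * R * Φᴴ).trace
          = (T * (T * Φ * R * Φᴴ)).trace := by rw [← hT2]; congr 1; simp [Matrix.mul_assoc]
        _ = ((T * Φ * R * Φᴴ) * T).trace := Matrix.trace_mul_comm _ _
        _ = (B * R * Bᴴ).trace := by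
            rw [hBdef, conjTranspose_mul, hT.eq]; congr 1; simp [Matrix.mul_assoc]
    rw [e1]
    simp only [Matrix.trace, Matrix.diag, Matrix.mul_apply, Matrix.conjTranspose_apply,
      Finset.sum_mul]
  rw [← h1, ← h2, Matrix.smul_apply, smul_eq_mul]
end
end

section
/- Let (Ω, P) be a probability space and M, N positive integers. Let X : Ω → ℂ^{M×N} be a random matrix with E[X_{ij} · conj(X_{kl})] equal to 1 if (i,j)=(k,l) and 0 otherwise (all such products integrable). Let S ∈ ℂ^{M×M}, T ∈ ℂ^{N×N} be Hermitian with S·S = R_AP and T·T = R_RIS, let Φ ∈ ℂ^{N×N} be deterministic, and let z̄_k, z̄_{k'} ∈ ℂ^N. Suppose the centered aggregated channels of two distinct users decompose as ũ_k = S X T Φ z̄_k + r_k and ũ_{k'} = S X T Φ z̄_{k'} + r_{k'}, where r_k, r_{k'} : Ω → ℂ^M are random vectors satisfying (entrywise, with all products integrable) E[(S X T Φ z̄_k) r_{k'}ᴴ] = 0, E[r_k (S X T Φ z̄_{k'})ᴴ] = 0, and E[r_k r_{k'}ᴴ] = 0. Then E[ũ_k ũ_{k'}ᴴ] = Tr(R_RIS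 Φ z̄_k z̄_{k'}ᴴ Φᴴ) · R_AP. -/
open MeasureTheory Matrix BigOperators

noncomputable section

private lemma aux_expand {Ω : Type*} (M N : ℕ)
    (X : Ω → Matrix (Fin M) (Fin N) ℂ)
    (S : Matrix (Fin M) (Fin M) ℂ) (w w' : Fin N → ℂ) (i j : Fin M) (ω : Ω) :
    (∑ p, ∑ q, S i p * w q * X ω p q) * star (∑ p, ∑ q, S j p * w' q * X ω p q)
      = ∑ p, ∑ p', ∑ q, ∑ q', (S i p * w q * (star (S j p') * star (w' q'))) *
          (X ω p q * star (X ω p' q')) := by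
  simp only [star_sum, star_mul']
  rw [Finset.sum_mul_sum]
  refine Finset.sum_congr rfl fun p _ => ?_
  refine Finset.sum_congr rfl fun p' _ => ?_
  rw [Finset.sum_mul_sum]
  refine Finset.sum_congr rfl fun q _ => ?_
  refine Finset.sum_congr rfl fun q' _ => ?_
  ring

private lemma aux_int {Ω : Type*} [MeasurableSpace Ω] (P : Measure Ω) (M N : ℕ)
    (X : Ω → Matrix (Fin M) (Fin N) ℂ)
    (hXint : ∀ (i k : Fin M) (j l : Fin N),
      Integrable (fun ω => X ω i j * star (X ω k l)) P)
    (S : Matrix (Fin M) (Fin M) ℂ) (w w' : Fin N → ℂ) (i j : Fin M) :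
    Integrable (fun ω =>
      (∑ p, ∑ q, S i p * w q * X ω p q) * star (∑ p, ∑ q, S j p * w' q * X ω p q)) P := by
  have : (fun ω =>
      (∑ p, ∑ q, S i p * w q * X ω p q) * star (∑ p, ∑ q, S j p * w' q * X ω p q))
      = fun ω => ∑ p, ∑ p', ∑ q, ∑ q', (S i p * w q * (star (S j p') * star (w' q'))) *
          (X ω p q * star (X ω p' q')) :=
    funext fun ω => aux_expand M N X S w w' i j ω
  rw [this]
  exact integrable_finset_sum _ (fun p _ => integrable_finset_sum _ (fun p' _ =>
    integrable_finset_sum _ (fun q _ => integrable_finset_sum _ (fun q' _ =>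
      ((hXint p p' q q').const_mul _)))))

private lemma aux_val {Ω : Type*} [MeasurableSpace Ω] (P : Measure Ω) (M N : ℕ)
    (X : Ω → Matrix (Fin M) (Fin N) ℂ)
    (hXint : ∀ (i k : Fin M) (j l : Fin N),
      Integrable (fun ω => X ω i j * star (X ω k l)) P)
    (hXmom : ∀ (i k : Fin M) (j l : Fin N),
      ∫ ω, X ω i j * star (X ω k l) ∂P = if i = k ∧ j = l then 1 else 0)
    (S : Matrix (Fin M) (Fin M) ℂ) (w w' : Fin N → ℂ) (i j : Fin M) :
    ∫ ω, (∑ p, ∑ q, S i p * w q * X ω p q) * star (∑ p, ∑ q, S j p * w' q * X ω p q) ∂P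
      = (∑ p, S i p * star (S j p)) * (∑ q, w q * star (w' q)) := by
  calc ∫ ω, (∑ p, ∑ q, S i p * w q * X ω p q) * star (∑ p, ∑ q, S j p * w' q * X ω p q) ∂P
      = ∑ p, ∑ p', ∑ q, ∑ q', (S i p * w q * (star (S j p') * star (w' q'))) *
          (if p = p' ∧ q = q' then (1:ℂ) else 0) := by
        simp only [aux_expand M N X S w w' i j]
        rw [integral_finset_sum _ (fun p _ => integrable_finset_sum _ (fun p' _ =>
          integrable_finset_sum _ (fun q _ => integrable_finset_sum _ (fun q' _ =>
            ((hXint p p' q q').const_mul _)))))]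
        refine Finset.sum_congr rfl fun p _ => ?_
        rw [integral_finset_sum _ (fun p' _ =>
          integrable_finset_sum _ (fun q _ => integrable_finset_sum _ (fun q' _ =>
            ((hXint p p' q q').const_mul _))))]
        refine Finset.sum_congr rfl fun p' _ => ?_
        rw [integral_finset_sum _ (fun q _ => integrable_finset_sum _ (fun q' _ =>
            ((hXint p p' q q').const_mul _)))]
        refine Finset.sum_congr rfl fun q _ => ?_
        rw [integral_finset_sum _ (fun q' _ => ((hXint p p' q q').const_mul _))]
        refine Finset.sum_congr rfl fun q' _ => ?_
        rw [integral_const_mul, hXmom]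
    _ = (∑ p, S i p * star (S j p)) * (∑ q, w q * star (w' q)) := by
        rw [Finset.sum_mul_sum]
        refine Finset.sum_congr rfl fun p _ => ?_
        rw [Finset.sum_eq_single p]
        · refine Finset.sum_congr rfl fun q _ => ?_
          rw [Finset.sum_eq_single q]
          · simp; ring
          · intro q' _ hq'; simp [hq'.symm]
          · simp
        · intro p' _ hp'
          apply Finset.sum_eq_zero; intro q _
          apply Finset.sum_eq_zero; intro q' _
          simp [hp'.symm]
        · simp

private lemma aux_trace (N : ℕ) (A : Matrix (Fin N) (Fin N) ℂ) (z z' : Fin N → ℂ) :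
    ∑ q, (A.mulVec z) q * star ((A.mulVec z') q)
      = (Aᴴ * A * vecMulVec z (star z')).trace := by
  simp only [Matrix.trace, Matrix.mul_apply, vecMulVec_apply, mulVec, dotProduct, Matrix.diag,
    Finset.mul_sum, Finset.sum_mul, conjTranspose_apply, Pi.star_apply, star_sum, star_mul']
  rw [Finset.sum_comm]
  congr 1; ext a
  rw [Finset.sum_comm]
  congr 1; ext b
  congr 1; ext c
  ring

private lemma aux_mulVec {Ω : Type*} (M N : ℕ)
    (X : Ω → Matrix (Fin M) (Fin N) ℂ)
    (S : Matrix (Fin M) (Fin M) ℂ) (T Φ : Matrix (Fin N) (Fin N) ℂ)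
    (v : Fin N → ℂ) (ω : Ω) (i : Fin M) :
    ((S * X ω * T * Φ).mulVec v) i
      = ∑ p, ∑ q, S i p * ((T * Φ).mulVec v) q * X ω p q := by
  have h : S * X ω * T * Φ = S * (X ω * (T * Φ)) := by
    rw [Matrix.mul_assoc, Matrix.mul_assoc]
  rw [h, ← Matrix.mulVec_mulVec, ← Matrix.mulVec_mulVec]
  simp only [mulVec, dotProduct, Finset.mul_sum]
  refine Finset.sum_congr rfl fun p _ => ?_
  refine Finset.sum_congr rfl fun q _ => ?_
  rw [Finset.sum_mul]
  exact Finset.sum_congr rfl fun x _ => by ring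

/-- **Cross-correlation claim of Lemma 2.**
Let `X` have uncorrelated unit-variance entries, `S, T` Hermitian square roots of `R_AP`,
`R_RIS`.  If the centered aggregated channels of two distinct users decompose as
`ũ_k = S X T Φ z̄_k + r_k` and `ũ_{k'} = S X T Φ z̄_{k'} + r_{k'}` with the
`r`-components uncorrelated across users and with the common-`X` terms, then
`E[ũ_k ũ_{k'}ᴴ] = Tr(R_RIS Φ z̄_k z̄_{k'}ᴴ Φᴴ) • R_AP`. -/
theorem cross_correlation_aggregated_channels
    {Ω : Type*} [MeasurableSpace Ω] (P : Measure Ω) [IsProbabilityMeasure P]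
    (M N : ℕ) (hM : 0 < M) (hN : 0 < N)
    (X : Ω → Matrix (Fin M) (Fin N) ℂ)
    (hXint : ∀ (i k : Fin M) (j l : Fin N),
      Integrable (fun ω => X ω i j * star (X ω k l)) P)
    (hXmom : ∀ (i k : Fin M) (j l : Fin N),
      ∫ ω, X ω i j * star (X ω k l) ∂P = if i = k ∧ j = l then 1 else 0)
    (S R_AP : Matrix (Fin M) (Fin M) ℂ) (T R_RIS : Matrix (Fin N) (Fin N) ℂ)
    (hS : S.IsHermitian) (hT : T.IsHermitian)
    (hS2 : S * S = R_AP) (hT2 : T * T = R_RIS)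
    (Φ : Matrix (Fin N) (Fin N) ℂ) (zbk zbk' : Fin N → ℂ)
    (rk rk' : Ω → Fin M → ℂ)
    (utk utk' : Ω → Fin M → ℂ)
    (hutk : ∀ ω, utk ω = (S * X ω * T * Φ).mulVec zbk + rk ω)
    (hutk' : ∀ ω, utk' ω = (S * X ω * T * Φ).mulVec zbk' + rk' ω)
    (hint1 : ∀ i j, Integrable
      (fun ω => ((S * X ω * T * Φ).mulVec zbk) i * star (rk' ω j)) P)
    (hint2 : ∀ i j, Integrable
      (fun ω => rk ω i * star (((S * X ω * T * Φ).mulVec zbk') j)) P)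
    (hint3 : ∀ i j, Integrable (fun ω => rk ω i * star (rk' ω j)) P)
    (hcross1 : outerExp P (fun ω => (S * X ω * T * Φ).mulVec zbk) rk' = 0)
    (hcross2 : outerExp P rk (fun ω => (S * X ω * T * Φ).mulVec zbk') = 0)
    (hcross3 : outerExp P rk rk' = 0) :
    outerExp P utk utk'
      = (R_RIS * Φ * vecMulVec zbk (star zbk') * Φᴴ).trace • R_AP := by
  set w : Fin N → ℂ := (T * Φ).mulVec zbk with hw
  set w' : Fin N → ℂ := (T * Φ).mulVec zbk' with hw'
  have hfi : ∀ ω i, ((S * X ω * T * Φ).mulVec zbk) i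
      = ∑ p, ∑ q, S i p * w q * X ω p q := fun ω i => aux_mulVec M N X S T Φ zbk ω i
  have hfi' : ∀ ω i, ((S * X ω * T * Φ).mulVec zbk') i
      = ∑ p, ∑ q, S i p * w' q * X ω p q := fun ω i => aux_mulVec M N X S T Φ zbk' ω i
  ext i j
  -- expand the product of sums
  have hexp : ∀ ω, utk ω i * star (utk' ω j)
      = ((S * X ω * T * Φ).mulVec zbk) i * star (((S * X ω * T * Φ).mulVec zbk') j)
        + ((S * X ω * T * Φ).mulVec zbk) i * star (rk' ω j)
        + rk ω i * star (((S * X ω * T * Φ).mulVec zbk') j)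
        + rk ω i * star (rk' ω j) := by
    intro ω
    rw [hutk, hutk']
    simp only [Pi.add_apply, star_add]
    ring
  have hmain_int : Integrable (fun ω =>
      ((S * X ω * T * Φ).mulVec zbk) i * star (((S * X ω * T * Φ).mulVec zbk') j)) P := by
    have h1 : (fun ω => ((S * X ω * T * Φ).mulVec zbk) i
        * star (((S * X ω * T * Φ).mulVec zbk') j))
        = fun ω => (∑ p, ∑ q, S i p * w q * X ω p q)
            * star (∑ p, ∑ q, S j p * w' q * X ω p q) :=
      funext fun ω => by rw [hfi, hfi']
    rw [h1]
    exact aux_int P M N X hXint S w w' i j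
  have key : ∫ ω, utk ω i * star (utk' ω j) ∂P
      = ∫ ω, ((S * X ω * T * Φ).mulVec zbk) i * star (((S * X ω * T * Φ).mulVec zbk') j) ∂P
        + ∫ ω, ((S * X ω * T * Φ).mulVec zbk) i * star (rk' ω j) ∂P
        + ∫ ω, rk ω i * star (((S * X ω * T * Φ).mulVec zbk') j) ∂P
        + ∫ ω, rk ω i * star (rk' ω j) ∂P := by
    have h12 : Integrable (fun ω =>
        ((S * X ω * T * Φ).mulVec zbk) i * star (((S * X ω * T * Φ).mulVec zbk') j)
          + ((S * X ω * T * Φ).mulVec zbk) i * star (rk' ω j)) P :=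
      hmain_int.add (hint1 i j)
    have h123 : Integrable (fun ω =>
        ((S * X ω * T * Φ).mulVec zbk) i * star (((S * X ω * T * Φ).mulVec zbk') j)
          + ((S * X ω * T * Φ).mulVec zbk) i * star (rk' ω j)
          + rk ω i * star (((S * X ω * T * Φ).mulVec zbk') j)) P :=
      h12.add (hint2 i j)
    simp only [hexp]
    rw [integral_add h123 (hint3 i j), integral_add h12 (hint2 i j),
      integral_add hmain_int (hint1 i j)]
  have hz1 : ∫ ω, ((S * X ω * T * Φ).mulVec zbk) i * star (rk' ω j) ∂P = 0 := by
    have := Matrix.ext_iff.mpr hcross1 i j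
    simpa [outerExp] using this
  have hz2 : ∫ ω, rk ω i * star (((S * X ω * T * Φ).mulVec zbk') j) ∂P = 0 := by
    have := Matrix.ext_iff.mpr hcross2 i j
    simpa [outerExp] using this
  have hz3 : ∫ ω, rk ω i * star (rk' ω j) ∂P = 0 := by
    have := Matrix.ext_iff.mpr hcross3 i j
    simpa [outerExp] using this
  have hmain : ∫ ω, ((S * X ω * T * Φ).mulVec zbk) i
      * star (((S * X ω * T * Φ).mulVec zbk') j) ∂P
      = (∑ p, S i p * star (S j p)) * (∑ q, w q * star (w' q)) := by
    have h1 : (fun ω => ((S * X ω * T * Φ).mulVec zbk) i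
        * star (((S * X ω * T * Φ).mulVec zbk') j))
        = fun ω => (∑ p, ∑ q, S i p * w q * X ω p q)
            * star (∑ p, ∑ q, S j p * w' q * X ω p q) :=
      funext fun ω => by rw [hfi, hfi']
    rw [h1]
    exact aux_val P M N X hXint hXmom S w w' i j
  have hSpart : (∑ p, S i p * star (S j p)) = R_AP i j := by
    rw [← hS2, Matrix.mul_apply]
    refine Finset.sum_congr rfl fun p _ => ?_
    rw [hS.apply p j]
  have hTpart : (∑ q, w q * star (w' q))
      = (R_RIS * Φ * vecMulVec zbk (star zbk') * Φᴴ).trace := by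
    rw [hw, hw', aux_trace N (T * Φ) zbk zbk']
    have hA : (T * Φ)ᴴ * (T * Φ) = Φᴴ * (R_RIS * Φ) := by
      rw [Matrix.conjTranspose_mul, hT.eq, Matrix.mul_assoc, ← Matrix.mul_assoc T T Φ, hT2]
    rw [hA, Matrix.mul_assoc, Matrix.trace_mul_comm]
  show ∫ ω, utk ω i * star (utk' ω j) ∂P = _
  rw [key, hz1, hz2, hz3, hmain, hSpart, hTpart]
  simp only [Matrix.smul_apply, smul_eq_mul]
  ring
end
end
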